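/- arXiv:1505.04662 — 7 statements merged into one kernel-verified Lean document; each statement's English description precedes it below -/
import Mathlib

section
/- If a length space (X,d) has bounded growth at some scale (there exist R > r > 0 and N ∈ ℕ such that every open ball of radius R can be covered by N open balls of radius r), then X is uniformly coarsely proper: there exist N : (0,∞)×(0,∞) → ℕ and r_b > 0 such that for all R > r > r_b, every open ball of radius R can be covered by N(R,r) open balls of radius r. -/
open Metric

/-! In a length space a point at distance `< δ + s` from `x` lies within `δ` of `ball x s`: walk
along an almost shortest path for the fraction `s / (s + δ)` of its parameter. Hence a cover of
`ball x s` by `N` balls of radius `r` thickens to a cover of `ball x (δ + s)` by `N` balls of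
radius `δ + r`. With `δ = R - r`, covering each of these `R`-balls again by `N` balls of radius
`r` shows by induction that balls of radius `k (R - r) + R` are covered by `N ^ (k + 1)` balls of
radius `r`, and every radius is reached for large `k`. -/

/-- Paths of length `< dist x y + ε`, parametrised proportionally to arc length; equivalent to
distances being infima of path lengths. -/
def IsLengthSpace (X : Type*) [PseudoMetricSpace X] : Prop :=
  ∀ x y : X, ∀ ε > (0:ℝ), ∃ f : ℝ → X, f 0 = x ∧ f 1 = y ∧
    ∀ s ∈ Set.Icc (0:ℝ) 1, ∀ t ∈ Set.Icc (0:ℝ) 1, dist (f s) (f t) ≤ (dist x y + ε) * |s - t|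

def BallsCoveredBy (X : Type*) [PseudoMetricSpace X] (N : ℕ) (R r : ℝ) : Prop :=
  ∀ x : X, ∃ c : Finset X, c.card ≤ N ∧ ball x R ⊆ ⋃ y ∈ c, ball y r

section

variable {X : Type*} [PseudoMetricSpace X]

namespace BallsCoveredBy

variable {M N N' : ℕ} {S R R' r r' : ℝ}

theorem mono (h : BallsCoveredBy X N R r) (hN : N ≤ N') (hR : R' ≤ R) (hr : r ≤ r') :
    BallsCoveredBy X N' R' r' := fun x =>
  let ⟨c, hc, hcov⟩ := h x
  ⟨c, hc.trans hN, (ball_subset_ball hR).trans <|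
    hcov.trans <| Set.iUnion₂_mono fun _ _ => ball_subset_ball hr⟩

theorem trans (h₁ : BallsCoveredBy X M S R) (h₂ : BallsCoveredBy X N R r) :
    BallsCoveredBy X (M * N) S r := by
  classical
  choose g hg hgcov using h₂
  intro x
  obtain ⟨c, hc, hcov⟩ := h₁ x
  refine ⟨c.biUnion g, ?_, ?_⟩
  · calc (c.biUnion g).card ≤ c.card * N := Finset.card_biUnion_le_card_mul c g N fun y _ => hg y
      _ ≤ M * N := Nat.mul_le_mul_right N hc
  · calc ball x S ⊆ ⋃ y ∈ c, ball y R := hcov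
      _ ⊆ ⋃ y ∈ c, ⋃ z ∈ g y, ball z r := Set.iUnion₂_mono fun y _ => hgcov y
      _ = ⋃ z ∈ c.biUnion g, ball z r := (Finset.set_biUnion_biUnion c g _).symm

end BallsCoveredBy

namespace IsLengthSpace

variable (hX : IsLengthSpace X)
include hX

theorem exists_dist_lt_dist_lt {x z : X} {a b : ℝ} (ha : 0 < a) (hb : 0 < b)
    (hxz : dist x z < a + b) : ∃ y, dist x y < a ∧ dist y z < b := by
  obtain ⟨f, rfl, rfl, hf⟩ := hX x z ((a + b - dist x z) / 2) (by linarith)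
  set L := dist (f 0) (f 1) + (a + b - dist (f 0) (f 1)) / 2 with hL_def
  have hL : L < a + b := by rw [hL_def]; linarith
  have hab : 0 < a + b := by linarith
  set t := a / (a + b) with ht
  have ht₀ : 0 ≤ t := by positivity
  have ht₁ : t ≤ 1 := (div_le_one hab).2 (by linarith)
  have h0 : (0:ℝ) ∈ Set.Icc (0:ℝ) 1 := Set.left_mem_Icc.2 zero_le_one
  have h1 : (1:ℝ) ∈ Set.Icc (0:ℝ) 1 := Set.right_mem_Icc.2 zero_le_one
  refine ⟨f t, ?_, ?_⟩
  · calc dist (f 0) (f t) ≤ L * |0 - t| := hf 0 h0 t ⟨ht₀, ht₁⟩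
      _ = L * t := by rw [zero_sub, abs_neg, abs_of_nonneg ht₀]
      _ < (a + b) * t := by gcongr
      _ = a := mul_div_cancel₀ a hab.ne'
  · calc dist (f t) (f 1) ≤ L * |t - 1| := hf t ⟨ht₀, ht₁⟩ 1 h1
      _ = L * (b / (a + b)) := by
          rw [abs_of_nonpos (by linarith), ht]; field_simp; ring
      _ < (a + b) * (b / (a + b)) := by gcongr
      _ = b := mul_div_cancel₀ b hab.ne'

theorem thickening_ball {x : X} {ε δ : ℝ} (hε : 0 < ε) (hδ : 0 < δ) :
    thickening ε (ball x δ) = ball x (ε + δ) := by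
  refine (Metric.thickening_ball x ε δ).antisymm fun z hz => mem_thickening_iff.2 ?_
  rw [mem_ball', add_comm] at hz
  obtain ⟨y, hxy, hyz⟩ := hX.exists_dist_lt_dist_lt hδ hε hz
  exact ⟨y, mem_ball'.2 hxy, dist_comm z y ▸ hyz⟩

theorem ballsCoveredBy_add {N : ℕ} {s r δ : ℝ} (h : BallsCoveredBy X N s r) (hs : 0 < s)
    (hδ : 0 < δ) : BallsCoveredBy X N (δ + s) (δ + r) := fun x =>
  let ⟨c, hc, hcov⟩ := h x
  ⟨c, hc, calc
    ball x (δ + s) = thickening δ (ball x s) := (hX.thickening_ball hδ hs).symm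
    _ ⊆ thickening δ (⋃ y ∈ c, ball y r) := thickening_subset_of_subset δ hcov
    _ = ⋃ y ∈ c, thickening δ (ball y r) := by simp only [thickening_iUnion]
    _ ⊆ ⋃ y ∈ c, ball y (δ + r) := Set.iUnion₂_mono fun y _ => Metric.thickening_ball y δ r⟩

theorem ballsCoveredBy_pow {N : ℕ} {R r : ℝ} (h : BallsCoveredBy X N R r) (hr : 0 < r)
    (hRr : r < R) (k : ℕ) : BallsCoveredBy X (N ^ (k + 1)) (k * (R - r) + R) r := by
  induction k with
  | zero => simpa using h
  | succ k ih =>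
    have hpos : 0 < k * (R - r) + R :=
      add_pos_of_nonneg_of_pos (mul_nonneg k.cast_nonneg (sub_nonneg.2 hRr.le)) (hr.trans hRr)
    have h' : BallsCoveredBy X N (R - r + r) r := by rwa [sub_add_cancel]
    have hstep := (hX.ballsCoveredBy_add ih hpos (sub_pos.2 hRr)).trans h'
    rwa [← pow_succ, show R - r + (k * (R - r) + R) = ((k + 1 : ℕ) : ℝ) * (R - r) + R by
      push_cast; ring] at hstep

end IsLengthSpace

end

/-- If a length space has bounded growth at some scale
(there are `R > r > 0` and `N` such that every open ball of radius `R` is covered by `N`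
open balls of radius `r`), then it is uniformly coarsely proper. -/
theorem lengthSpace_boundedGrowth_uniformlyCoarselyProper {X : Type*} [MetricSpace X]
    (hlength : ∀ x y : X, ∀ ε > (0:ℝ), ∃ f : ℝ → X, f 0 = x ∧ f 1 = y ∧
      ∀ s ∈ Set.Icc (0:ℝ) 1, ∀ t ∈ Set.Icc (0:ℝ) 1,
        dist (f s) (f t) ≤ (dist x y + ε) * |s - t|)
    (R r : ℝ) (N : ℕ) (hr : 0 < r) (hRr : r < R)
    (hcov : ∀ x : X, ∃ c : Finset X, c.card ≤ N ∧ ball x R ⊆ ⋃ y ∈ c, ball y r) :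
    ∃ (N' : ℝ → ℝ → ℕ) (rb : ℝ), 0 < rb ∧ ∀ R' r', rb < r' → r' < R' →
      ∀ x : X, ∃ c : Finset X, c.card ≤ N' R' r' ∧ ball x R' ⊆ ⋃ y ∈ c, ball y r' := by
  have hX : IsLengthSpace X := hlength
  refine ⟨fun R' _ => N ^ (⌈(R' - R) / (R - r)⌉₊ + 1), r, hr, fun R' r' hrr' _ => ?_⟩
  refine (hX.ballsCoveredBy_pow hcov hr hRr _).mono le_rfl ?_ hrr'.le
  have hk := Nat.le_ceil ((R' - R) / (R - r))
  rw [div_le_iff₀ (sub_pos.2 hRr)] at hk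
  linarith
end

section
/- In a length space with bounded growth at scale R > r > 0 with covering constant N, for every n ∈ ℕ and every point x, the ball B(x, (n+1)R − nr) can be covered by N^{n+1} open balls of radius r. -/
/-!
Since `(n + 2) R - (n + 1) r = ((n + 1) R - n r) + (R - r)`, it suffices to show that
thickening a set covered by `k` balls of radius `r` by `R - r` yields a set covered by `k N`
such balls (each `r`-ball thickens into an `R`-ball), and that in a length space a ball of
radius `a + b` lies in the `b`-thickening of the concentric ball of radius `a`: a nearly
shortest curve from the centre to a point of the big ball passes through the small ball
within distance `b` of that point.
-/

open Metric

def HasNearGeodesics (X : Type*) [PseudoMetricSpace X] : Prop :=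
  ∀ x y : X, ∀ ε > (0:ℝ), ∃ f : ℝ → X, f 0 = x ∧ f 1 = y ∧
    ∀ s ∈ Set.Icc (0:ℝ) 1, ∀ t ∈ Set.Icc (0:ℝ) 1, dist (f s) (f t) ≤ (dist x y + ε) * |s - t|

def IsCoveredByBalls {X : Type*} [PseudoMetricSpace X] (s : Set X) (k : ℕ) (r : ℝ) : Prop :=
  ∃ c : Finset X, c.card ≤ k ∧ s ⊆ ⋃ y ∈ c, ball y r

namespace HasNearGeodesics

variable {X : Type*} [PseudoMetricSpace X]

theorem exists_dist_lt_of_dist_lt_add (hX : HasNearGeodesics X) {x z : X} {a b : ℝ}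
    (ha : 0 < a) (hb : 0 < b) (hxz : dist x z < a + b) :
    ∃ w, dist x w < a ∧ dist w z < b := by
  obtain ⟨f, hf0, hf1, hf⟩ := hX x z ((a + b - dist x z) / 2) (by linarith)
  have hspeed : dist x z + (a + b - dist x z) / 2 < a + b := by linarith
  set t := a / (a + b)
  have ht0 : 0 < t := by positivity
  have ht1 : t < 1 := (div_lt_one (by positivity)).mpr (by linarith)
  have hmem : ∀ s, 0 ≤ s → s ≤ 1 → s ∈ Set.Icc (0:ℝ) 1 := fun s h0 h1 => ⟨h0, h1⟩
  refine ⟨f t, ?_, ?_⟩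
  · calc dist x (f t) = dist (f 0) (f t) := by rw [hf0]
      _ ≤ (dist x z + (a + b - dist x z) / 2) * |0 - t| :=
          hf 0 (hmem 0 le_rfl zero_le_one) t (hmem t ht0.le ht1.le)
      _ < (a + b) * t := by
          rw [zero_sub, abs_neg, abs_of_pos ht0]
          exact mul_lt_mul_of_pos_right hspeed ht0
      _ = a := by simp only [t]; field_simp
  · calc dist (f t) z = dist (f t) (f 1) := by rw [hf1]
      _ ≤ (dist x z + (a + b - dist x z) / 2) * |t - 1| :=
          hf t (hmem t ht0.le ht1.le) 1 (hmem 1 zero_le_one le_rfl)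
      _ < (a + b) * (1 - t) := by
          rw [abs_sub_comm, abs_of_pos (by linarith)]
          exact mul_lt_mul_of_pos_right hspeed (by linarith)
      _ = b := by simp only [t]; field_simp; ring

theorem ball_add_subset_thickening (hX : HasNearGeodesics X) (x : X) {a b : ℝ}
    (ha : 0 < a) (hb : 0 < b) : ball x (a + b) ⊆ thickening b (ball x a) := by
  intro z hz
  obtain ⟨w, hxw, hwz⟩ := hX.exists_dist_lt_of_dist_lt_add ha hb (mem_ball'.mp hz)
  exact mem_thickening_iff.mpr ⟨w, mem_ball'.mpr hxw, by rwa [dist_comm]⟩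

end HasNearGeodesics

namespace IsCoveredByBalls

variable {X : Type*} [PseudoMetricSpace X] {s t : Set X} {k N : ℕ} {r R : ℝ}

theorem mono (hs : IsCoveredByBalls s k r) (hts : t ⊆ s) : IsCoveredByBalls t k r :=
  let ⟨c, hc, hsc⟩ := hs
  ⟨c, hc, hts.trans hsc⟩

theorem thickening (hs : IsCoveredByBalls s k r) (hR : ∀ y : X, IsCoveredByBalls (ball y R) N r) :
    IsCoveredByBalls (Metric.thickening (R - r) s) (k * N) r := by
  classical
  obtain ⟨c, hc, hsc⟩ := hs
  choose g hg hball using hR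
  refine ⟨c.biUnion g, ?_, ?_⟩
  · exact (Finset.card_biUnion_le_card_mul c g N fun y _ => hg y).trans
      (Nat.mul_le_mul_right N hc)
  · calc Metric.thickening (R - r) s
        ⊆ Metric.thickening (R - r) (⋃ y ∈ c, ball y r) := thickening_subset_of_subset _ hsc
      _ = ⋃ y ∈ c, Metric.thickening (R - r) (ball y r) := thickening_biUnion _ _ _
      _ ⊆ ⋃ y ∈ c, ball y R := Set.iUnion₂_mono fun y _ => by
          simpa using thickening_ball y (R - r) r
      _ ⊆ ⋃ y ∈ c, ⋃ w ∈ g y, ball w r := Set.iUnion₂_mono fun y _ => hball y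
      _ = ⋃ w ∈ c.biUnion g, ball w r := (Finset.set_biUnion_biUnion c g _).symm

end IsCoveredByBalls

/-- In a length space with bounded growth at scale `R > r > 0` with
covering constant `N`, for every `n ∈ ℕ` and every point `x`, the ball
`B(x, (n+1)R − nr)` can be covered by `N^(n+1)` open balls of radius `r`. -/
theorem lengthSpace_boundedGrowth_iterate {X : Type*} [MetricSpace X]
    (hlength : ∀ x y : X, ∀ ε > (0:ℝ), ∃ f : ℝ → X, f 0 = x ∧ f 1 = y ∧
      ∀ s ∈ Set.Icc (0:ℝ) 1, ∀ t ∈ Set.Icc (0:ℝ) 1,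
        dist (f s) (f t) ≤ (dist x y + ε) * |s - t|)
    (R r : ℝ) (N : ℕ) (hr : 0 < r) (hRr : r < R)
    (hcov : ∀ x : X, ∃ c : Finset X, c.card ≤ N ∧ ball x R ⊆ ⋃ y ∈ c, ball y r) :
    ∀ (n : ℕ) (x : X), ∃ c : Finset X, c.card ≤ N ^ (n + 1) ∧
      ball x ((n + 1) * R - n * r) ⊆ ⋃ y ∈ c, ball y r := by
  have hX : HasNearGeodesics X := hlength
  have hballs : ∀ y : X, IsCoveredByBalls (ball y R) N r := hcov
  suffices ∀ (n : ℕ) (x : X), IsCoveredByBalls (ball x ((n + 1) * R - n * r)) (N ^ (n + 1)) r from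
    this
  intro n
  induction n with
  | zero => simpa using hballs
  | succ n ih =>
    intro x
    have hrad : 0 < (n + 1) * R - n * r := by nlinarith [(n.cast_nonneg : (0:ℝ) ≤ n)]
    have hradius : ((n + 1 : ℕ) + 1) * R - (n + 1 : ℕ) * r = ((n + 1) * R - n * r) + (R - r) := by
      push_cast; ring
    rw [hradius, pow_succ]
    exact ((ih x).thickening hballs).mono (hX.ball_add_subset_thickening x hrad (sub_pos.mpr hRr))
end

section
/- The function ρ on H(Z) = Z × [0,∞) defined by ρ((x,t),(y,s)) = 2 log((d(x,y) + max{e^{−t}, e^{−s}}·D)/(e^{−(s+t)/2}·D)), where D = diam(Z) > 0, is a metric on H(Z). -/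
open Metric

/-- The hyperbolic cone "metric" on `H(Z) = Z × [0,∞)`:
`ρ((x,t),(y,s)) = 2 log((d(x,y) + max{e^{−t}, e^{−s}}·D)/(e^{−(s+t)/2}·D))`. -/
noncomputable def hypConeRho {Z : Type*} [MetricSpace Z] (D : ℝ) (p q : Z × ℝ) : ℝ :=
  2 * Real.log ((dist p.1 q.1 + max (Real.exp (-p.2)) (Real.exp (-q.2)) * D) /
    (Real.exp (-(p.2 + q.2) / 2) * D))

/-!
Put `R(p, q) = e^{ρ(p,q)/2}`. Since `max{e^{-t}, e^{-s}} = e^{-min(t,s)} ≥ e^{-(t+s)/2}`, with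
equality exactly when `t = s`, we get `R ≥ 1`, with equality exactly on the diagonal. The
triangle inequality for `ρ` is submultiplicativity of `R`; after clearing denominators it
follows from the triangle inequality of `d` and `min(t,r) + min(r,s) ≤ r + min(t,s)`.
-/

open Real

lemma max_exp_neg (t s : ℝ) : max (exp (-t)) (exp (-s)) = exp (-min t s) := by
  rw [← exp_monotone.map_max, max_neg_neg]

lemma exp_neg_avg_le_max (t s : ℝ) : exp (-(t + s) / 2) ≤ max (exp (-t)) (exp (-s)) := by
  rw [max_exp_neg, exp_le_exp]
  cases min_choice t s <;> linarith [min_le_left t s, min_le_right t s]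

lemma exp_neg_avg_eq_max_iff {t s : ℝ} :
    exp (-(t + s) / 2) = max (exp (-t)) (exp (-s)) ↔ t = s := by
  rw [max_exp_neg, exp_eq_exp]
  constructor
  · intro h
    cases min_choice t s <;> linarith [min_le_left t s, min_le_right t s]
  · rintro rfl
    rw [min_self]
    ring

lemma max_exp_neg_mul_le (t r s : ℝ) :
    exp (-r) * max (exp (-t)) (exp (-s)) ≤
      max (exp (-t)) (exp (-r)) * max (exp (-r)) (exp (-s)) := by
  simp only [max_exp_neg, ← exp_add, exp_le_exp]
  have : min t r + min r s ≤ r + min t s := by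
    rw [add_min r t s]
    exact le_min (by linarith [min_le_left t r, min_le_left r s])
      (by linarith [min_le_right t r, min_le_right r s])
  linarith

lemma add_mul_mul_le_add_mul_mul_add {d d₁ d₂ e e₁ e₂ c D : ℝ} (hD : 0 ≤ D) (hc : 0 ≤ c)
    (hd₁ : 0 ≤ d₁) (hd₂ : 0 ≤ d₂) (hd : d ≤ d₁ + d₂) (hc₁ : c ≤ e₁) (hc₂ : c ≤ e₂)
    (he : c * e ≤ e₁ * e₂) :
    (d + e * D) * c * D ≤ (d₁ + e₁ * D) * (d₂ + e₂ * D) :=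
  calc (d + e * D) * c * D = d * c * D + c * e * D ^ 2 := by ring
    _ ≤ d₁ * c * D + d₂ * c * D + e₁ * e₂ * D ^ 2 := by gcongr; nlinarith [mul_nonneg hc hD]
    _ ≤ d₁ * e₂ * D + d₂ * e₁ * D + e₁ * e₂ * D ^ 2 := by gcongr
    _ ≤ (d₁ + e₁ * D) * (d₂ + e₂ * D) := by nlinarith [mul_nonneg hd₁ hd₂]

section Ratio

variable {Z : Type*} [PseudoMetricSpace Z] {D : ℝ}

noncomputable def hypConeRatio (D : ℝ) (p q : Z × ℝ) : ℝ :=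
  (dist p.1 q.1 + max (exp (-p.2)) (exp (-q.2)) * D) / (exp (-(p.2 + q.2) / 2) * D)

lemma one_le_hypConeRatio (hD : 0 < D) (p q : Z × ℝ) : 1 ≤ hypConeRatio D p q := by
  rw [hypConeRatio, one_le_div (by positivity)]
  nlinarith [dist_nonneg (x := p.1) (y := q.1), exp_neg_avg_le_max p.2 q.2]

lemma hypConeRatio_comm (p q : Z × ℝ) : hypConeRatio D p q = hypConeRatio D q p := by
  rw [hypConeRatio, hypConeRatio, dist_comm, max_comm, add_comm p.2]

lemma hypConeRatio_le_mul (hD : 0 < D) (p w q : Z × ℝ) :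
    hypConeRatio D p q ≤ hypConeRatio D p w * hypConeRatio D w q := by
  have hexp : exp (-(p.2 + w.2) / 2) * exp (-(w.2 + q.2) / 2) =
      exp (-(p.2 + q.2) / 2) * exp (-w.2) := by
    rw [← exp_add, ← exp_add]
    ring_nf
  have key := add_mul_mul_le_add_mul_mul_add hD.le (exp_pos (-w.2)).le dist_nonneg dist_nonneg
    (dist_triangle p.1 w.1 q.1) (le_max_right _ _) (le_max_left _ _)
    (max_exp_neg_mul_le p.2 w.2 q.2)
  rw [hypConeRatio, hypConeRatio, hypConeRatio, div_mul_div_comm,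
    div_le_div_iff₀ (by positivity) (by positivity)]
  calc _ = (dist p.1 q.1 + max (exp (-p.2)) (exp (-q.2)) * D) * exp (-w.2) * D *
        (exp (-(p.2 + q.2) / 2) * D) := by
        rw [mul_mul_mul_comm, hexp]
        ring
    _ ≤ _ := by gcongr

end Ratio

lemma hypConeRatio_eq_one_iff {Z : Type*} [MetricSpace Z] {D : ℝ} (hD : 0 < D) {p q : Z × ℝ} :
    hypConeRatio D p q = 1 ↔ p = q := by
  rw [hypConeRatio, div_eq_one_iff_eq (by positivity)]
  constructor
  · intro h
    have hle := mul_le_mul_of_nonneg_right (exp_neg_avg_le_max p.2 q.2) hD.le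
    have hdist : dist p.1 q.1 = 0 := by linarith [dist_nonneg (x := p.1) (y := q.1)]
    have hmax : exp (-(p.2 + q.2) / 2) = max (exp (-p.2)) (exp (-q.2)) :=
      mul_right_cancel₀ hD.ne' (by linarith)
    exact Prod.ext (dist_eq_zero.mp hdist) (exp_neg_avg_eq_max_iff.mp hmax)
  · rintro rfl
    rw [dist_self, max_self, zero_add, ← two_mul, neg_mul_eq_mul_neg,
      mul_div_cancel_left₀ _ two_ne_zero]

/-- The function `ρ` is a metric on `H(Z) = Z × [0,∞)`,
where `D = diam Z > 0`. -/
theorem hypConeRho_is_metric {Z : Type*} [MetricSpace Z]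
    (hbdd : Bornology.IsBounded (Set.univ : Set Z)) (a b : Z) (hab : a ≠ b)
    (D : ℝ) (hD : D = Metric.diam (Set.univ : Set Z)) :
    (∀ p q : Z × ℝ, 0 ≤ p.2 → 0 ≤ q.2 → 0 ≤ hypConeRho D p q) ∧
    (∀ p q : Z × ℝ, 0 ≤ p.2 → 0 ≤ q.2 → (hypConeRho D p q = 0 ↔ p = q)) ∧
    (∀ p q : Z × ℝ, hypConeRho D p q = hypConeRho D q p) ∧
    (∀ p q w : Z × ℝ, 0 ≤ p.2 → 0 ≤ q.2 → 0 ≤ w.2 →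
      hypConeRho D p q ≤ hypConeRho D p w + hypConeRho D w q) := by
  have hD₀ : 0 < D := hD ▸ diam_pos ⟨a, trivial, b, trivial, hab⟩ hbdd
  have hρ (p q : Z × ℝ) : hypConeRho D p q = 2 * log (hypConeRatio D p q) := rfl
  have hR (p q : Z × ℝ) : 0 < hypConeRatio D p q :=
    one_pos.trans_le (one_le_hypConeRatio hD₀ p q)
  refine ⟨fun p q _ _ => ?_, fun p q _ _ => ?_, fun p q => ?_, fun p q w _ _ _ => ?_⟩
  · rw [hρ]
    have := log_nonneg (one_le_hypConeRatio hD₀ p q)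
    positivity
  · rw [hρ, mul_eq_zero, or_iff_right two_ne_zero, ← hypConeRatio_eq_one_iff hD₀,
      ← exp_eq_one_iff, exp_log (hR p q)]
  · rw [hρ, hρ, hypConeRatio_comm]
  · rw [hρ, hρ, hρ, ← mul_add, ← log_mul (hR p w).ne' (hR w q).ne']
    gcongr
    exacts [hR p q, hypConeRatio_le_mul hD₀ p w q]
end

section
/- For any t ≥ 0, the projection π_t : H(Z) → S_t, π_t(p,s) = (p,t), restricted to H(Z) \ B_t = Z × [t,∞), is 1-Lipschitz with respect to the hyperbolic cone metric ρ. -/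
/-!
Write `g = e^{-(s+u)/2}` for the geometric mean of `e^{-s}` and `e^{-u}`. Then
`e^{ρ((x,s),(y,u))/2} = d(x,y)/(g D) + max(e^{-s}, e^{-u})/g`, while on the level `t`
the same quantity is `d(x,y)/(e^{-t} D) + 1`. For `s, u ≥ t` we have `g ≤ e^{-t}`, and the
maximum of two numbers dominates their geometric mean, so each summand can only grow.
-/

open Metric

open Real

lemma exp_neg_avg_le_max_exp (s u : ℝ) : exp (-(s + u) / 2) ≤ max (exp (-s)) (exp (-u)) := by
  rw [← exp_monotone.map_max]
  gcongr
  rcases le_total s u with h | h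
  · exact le_max_of_le_left (by linarith)
  · exact le_max_of_le_right (by linarith)

lemma hypConeRho_same_level {Z : Type*} [MetricSpace Z] (D t : ℝ) (x y : Z) :
    hypConeRho D (x, t) (y, t) = 2 * log ((dist x y + exp (-t) * D) / (exp (-t) * D)) := by
  rw [hypConeRho, max_self, show -(t + t) / 2 = -t by ring]

lemma hypConeRho_proj_le {Z : Type*} [MetricSpace Z] {D t : ℝ} (hD : 0 ≤ D) {p q : Z × ℝ}
    (hp : t ≤ p.2) (hq : t ≤ q.2) : hypConeRho D (p.1, t) (q.1, t) ≤ hypConeRho D p q := by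
  rcases hD.eq_or_lt with rfl | hD
  -- junk values: for `D = 0` both sides are `2 * log (x / 0) = 0`
  · simp [hypConeRho]
  rw [hypConeRho_same_level, hypConeRho]
  set g := exp (-(p.2 + q.2) / 2)
  set m := max (exp (-p.2)) (exp (-q.2))
  have hg_le : g ≤ exp (-t) := exp_le_exp.2 (by linarith)
  have hg_le_m : g ≤ m := exp_neg_avg_le_max_exp p.2 q.2
  have hg : 0 < g := exp_pos _
  gcongr 2 * log ?_
  calc (dist p.1 q.1 + exp (-t) * D) / (exp (-t) * D)
      = dist p.1 q.1 / (exp (-t) * D) + 1 := by field_simp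
    _ ≤ dist p.1 q.1 / (g * D) + m / g := by
        gcongr
        exact (one_le_div hg).2 hg_le_m
    _ = (dist p.1 q.1 + m * D) / (g * D) := by field_simp

theorem hypCone_projection_lipschitz_general {Z : Type*} [MetricSpace Z]
    (D : ℝ) (hD : D = Metric.diam (Set.univ : Set Z)) :
    ∀ t : ℝ, 0 ≤ t → ∀ p q : Z × ℝ, t ≤ p.2 → t ≤ q.2 →
      hypConeRho D (p.1, t) (q.1, t) ≤ hypConeRho D p q :=
  fun _ _ _ _ hp hq => hypConeRho_proj_le (hD ▸ diam_nonneg) hp hq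

/-- For `t ≥ 0`, the projection `π_t(p,s) = (p,t)` restricted to
`H(Z) \ B_t = Z × [t,∞)` is `1`-Lipschitz for the hyperbolic cone metric `ρ`. -/
theorem hypCone_projection_lipschitz {Z : Type*} [MetricSpace Z]
    (hbdd : Bornology.IsBounded (Set.univ : Set Z)) (a b : Z) (hab : a ≠ b)
    (D : ℝ) (hD : D = Metric.diam (Set.univ : Set Z)) :
    ∀ t : ℝ, 0 ≤ t → ∀ p q : Z × ℝ, t ≤ p.2 → t ≤ q.2 →
      hypConeRho D (p.1, t) (q.1, t) ≤ hypConeRho D p q :=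
  hypCone_projection_lipschitz_general D hD
end

section
/- For every ε > 0 there exists a constant κ(ε) > 1 such that 1 + e^{−s}·t ≤ (1+t)^{κ(ε)^{−s}} for all s ≥ 0 and all t ∈ [0, e^{ε}]. -/
/-!
Take `κ = exp α` with `α = 1 / (1 + e^ε)` and write `a = κ^(-s) = e^(-α s) ∈ (0, 1]`.
Bernoulli's inequality `(1 + t)^(1 - a) ≤ 1 + (1 - a) t` turns into the lower bound
`(1 + t)^a ≥ 1 + a t / (1 + (1 - a) t)`, so it suffices that `e^(-s) (1 + (1 - a) e^ε) ≤ a`.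
This follows from `1 - a ≤ α s` and `1 + (1 - α) s ≤ e^((1 - α) s)`, because `α e^ε = 1 - α`.
-/

open Real

theorem one_add_mul_div_le_rpow {t a : ℝ} (ht : -1 < t) (ha₀ : 0 ≤ a) (ha₁ : a ≤ 1) :
    1 + a * t / (1 + (1 - a) * t) ≤ (1 + t) ^ a := by
  have h1t : 0 < 1 + t := by linarith
  have hD : 0 < 1 + (1 - a) * t := by rcases le_total 0 t with h | h <;> nlinarith
  have hBernoulli : (1 + t) ^ (1 - a) ≤ 1 + (1 - a) * t :=
    rpow_one_add_le_one_add_mul_self ht.le (by linarith) (by linarith)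
  calc 1 + a * t / (1 + (1 - a) * t) = (1 + t) / (1 + (1 - a) * t) := by
        rw [one_add_div hD.ne']; congr 1; ring
    _ ≤ (1 + t) / (1 + t) ^ (1 - a) :=
        div_le_div_of_nonneg_left h1t.le (rpow_pos_of_pos h1t _) hBernoulli
    _ = (1 + t) ^ a := by
        conv_rhs => rw [show a = 1 - (1 - a) by ring, rpow_sub h1t, rpow_one]

theorem exp_neg_mul_one_add_one_sub_exp_mul_le {α T s : ℝ} (hT : 0 ≤ T) (hs : 0 ≤ s)
    (hαT : α * (1 + T) ≤ 1) :
    exp (-s) * (1 + (1 - exp (-(α * s))) * T) ≤ exp (-(α * s)) := by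
  have h_one_sub : 1 - exp (-(α * s)) ≤ α * s := by linarith [add_one_le_exp (-(α * s))]
  have h_linear : 1 + (1 - exp (-(α * s))) * T ≤ 1 + (1 - α) * s := by
    nlinarith [mul_le_mul_of_nonneg_right h_one_sub hT, mul_le_mul_of_nonneg_left hαT hs]
  calc exp (-s) * (1 + (1 - exp (-(α * s))) * T) ≤ exp (-s) * exp ((1 - α) * s) := by
        gcongr
        linarith [add_one_le_exp ((1 - α) * s)]
    _ = exp (-(α * s)) := by rw [← exp_add]; ring_nf

/-- For any `ε > 0` there exists `κ(ε) > 1` such that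
`1 + e^{−s}·t ≤ (1+t)^{κ(ε)^{−s}}` for all `s ≥ 0` and `t ∈ [0, e^ε]`. -/
theorem exists_kappa_inequality :
    ∀ ε > (0:ℝ), ∃ κ : ℝ, 1 < κ ∧ ∀ s : ℝ, 0 ≤ s → ∀ t ∈ Set.Icc (0:ℝ) (Real.exp ε),
      1 + Real.exp (-s) * t ≤ (1 + t) ^ (κ ^ (-s)) := by
  intro ε _
  set α := (1 + exp ε)⁻¹
  have hα : 0 < α := by positivity
  refine ⟨exp α, one_lt_exp_iff.mpr hα, fun s hs t ⟨ht₀, htT⟩ => ?_⟩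
  rw [← exp_mul, show α * -s = -(α * s) by ring]
  set a := exp (-(α * s))
  have ha₁ : a ≤ 1 := exp_le_one_iff.mpr (by nlinarith)
  have hu : exp (-s) ≤ a / (1 + (1 - a) * t) := by
    rw [le_div_iff₀ (by nlinarith)]
    calc exp (-s) * (1 + (1 - a) * t) ≤ exp (-s) * (1 + (1 - a) * exp ε) := by
          gcongr
      _ ≤ a := exp_neg_mul_one_add_one_sub_exp_mul_le (exp_pos ε).le hs
          (inv_mul_cancel₀ (by positivity)).le
  calc 1 + exp (-s) * t ≤ 1 + a / (1 + (1 - a) * t) * t := by gcongr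
    _ = 1 + a * t / (1 + (1 - a) * t) := by rw [div_mul_eq_mul_div]
    _ ≤ (1 + t) ^ a := one_add_mul_div_le_rpow (by linarith) (exp_pos _).le ha₁
end

section
/- If (Z,d) is a bounded uniformly coarsely connected space containing at least two points, then the slice S_r = Z × {r} with the restricted hyperbolic cone metric is ε-coarsely connected for every ε > 0; hence H(Z) \ B_r = Z × [r,∞) is uniformly coarsely connected. -/
/-!
A cone point `(x, r)` sits at scale `e^{-r} D`: on the slice `Z × {r}` the cone metric is
`2 log (1 + e^r d(x, y) / D)`, so a `δ`-chain in `Z` with `δ = (e^{ε/2} - 1) e^{-r} D` is an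
`ε`-chain in the slice. Vertical segments `{x} × [r, ∞)` are isometric to intervals, hence
`ε`-chain connected. Any two points of `Z × [r, ∞)` are therefore joined by descending to
height `r`, crossing the slice, and climbing back up.
-/

open Metric

open Relation

theorem Relation.reflTransGen_iff_exists_nat_chain {α : Type*} {R : α → α → Prop} {x y : α} :
    ReflTransGen R x y ↔
      ∃ (n : ℕ) (c : ℕ → α), c 0 = x ∧ c n = y ∧ ∀ i < n, R (c i) (c (i + 1)) := by
  constructor
  · intro h
    induction h using ReflTransGen.head_induction_on with
    | refl => exact ⟨0, fun _ => y, rfl, rfl, by simp⟩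
    | @head x z hxz _ ih =>
      obtain ⟨n, c, hc0, hcn, hc⟩ := ih
      refine ⟨n + 1, fun | 0 => x | i + 1 => c i, rfl, hcn, ?_⟩
      rintro (_ | i) hi
      · simpa [hc0] using hxz
      · exact hc i (by omega)
  · rintro ⟨n, c, rfl, rfl, hc⟩
    induction n generalizing c with
    | zero => exact .refl
    | succ n ih =>
      exact .head (hc 0 n.succ_pos) (ih (fun i => c (i + 1)) fun i hi => hc _ (by omega))

section

variable {Z : Type*} [MetricSpace Z]

theorem hypConeRho_comm (D : ℝ) (p q : Z × ℝ) : hypConeRho D p q = hypConeRho D q p := by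
  rw [hypConeRho, hypConeRho, dist_comm, max_comm, add_comm p.2]

theorem hypConeRho_vertical {D : ℝ} (hD : 0 < D) (x : Z) (t s : ℝ) :
    hypConeRho D (x, t) (x, s) = |t - s| := by
  have hmax : max (Real.exp (-t)) (Real.exp (-s)) = Real.exp (max (-t) (-s)) :=
    Real.exp_monotone.map_max.symm
  rw [hypConeRho, dist_self, zero_add, hmax, mul_div_mul_right _ _ hD.ne', ← Real.exp_sub,
    Real.log_exp]
  rcases le_total t s with h | h
  · rw [max_eq_left (by linarith), abs_of_nonpos (by linarith)]; ring
  · rw [max_eq_right (by linarith), abs_of_nonneg (by linarith)]; ring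

theorem hypConeRho_slice {D : ℝ} (hD : 0 < D) (r : ℝ) (x y : Z) :
    hypConeRho D (x, r) (y, r) = 2 * Real.log (1 + dist x y / (Real.exp (-r) * D)) := by
  have hscale : 0 < Real.exp (-r) * D := by positivity
  rw [hypConeRho, max_self, show -(r + r) / 2 = -r by ring, add_div, div_self hscale.ne', add_comm]

theorem hypConeRho_slice_le {D ε : ℝ} (hD : 0 < D) (r : ℝ) {x y : Z}
    (h : dist x y ≤ (Real.exp (ε / 2) - 1) * (Real.exp (-r) * D)) :
    hypConeRho D (x, r) (y, r) ≤ ε := by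
  have hscale : 0 < Real.exp (-r) * D := by positivity
  have hratio : 1 + dist x y / (Real.exp (-r) * D) ≤ Real.exp (ε / 2) := by
    rw [← le_sub_iff_add_le', div_le_iff₀ hscale]; exact h
  rw [hypConeRho_slice hD]
  have := Real.log_le_log (by positivity) hratio
  rw [Real.log_exp] at this
  linarith

end

namespace HypCone

variable {Z : Type*} [MetricSpace Z]

def Adj (D r ε : ℝ) (p q : Z × ℝ) : Prop :=
  r ≤ p.2 ∧ r ≤ q.2 ∧ hypConeRho D p q ≤ ε

instance (D r ε : ℝ) : Std.Symm (Adj (Z := Z) D r ε) where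
  symm p q := fun ⟨hp, hq, hpq⟩ => ⟨hq, hp, (hypConeRho_comm D q p).trans_le hpq⟩

theorem reflTransGen_adj_vertical {D ε : ℝ} (hD : 0 < D) (hε : 0 < ε) (x : Z) {r t : ℝ}
    (hrt : r ≤ t) : ReflTransGen (Adj D r ε) (x, t) (x, r) := by
  obtain ⟨n, hn⟩ := Archimedean.arch (t - r) hε
  induction n generalizing t with
  | zero =>
    obtain rfl : t = r := le_antisymm (by simpa using hn) hrt
    exact .refl
  | succ n ih =>
    rw [succ_nsmul, nsmul_eq_mul] at hn
    have hlow : t - ε ≤ max r (t - ε) := le_max_right _ _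
    have hhigh : max r (t - ε) ≤ t := max_le hrt (by linarith)
    have hstep : Adj D r ε (x, t) (x, max r (t - ε)) := by
      refine ⟨hrt, le_max_left _ _, ?_⟩
      rw [hypConeRho_vertical hD, abs_of_nonneg (by linarith)]
      linarith
    refine .head hstep (ih (le_max_left _ _) ?_)
    rw [nsmul_eq_mul, sub_le_iff_le_add']
    exact max_le (le_add_of_nonneg_right (by positivity)) (by linarith)

theorem exists_slice_chain {D ε : ℝ} (hD : 0 < D) (hε : 0 < ε)
    (hucc : ∀ δ > (0:ℝ), ∀ x y : Z, ∃ (n : ℕ) (c : ℕ → Z),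
      c 0 = x ∧ c n = y ∧ ∀ i < n, dist (c i) (c (i + 1)) ≤ δ) (r : ℝ) (x y : Z) :
    ∃ (n : ℕ) (c : ℕ → Z), c 0 = x ∧ c n = y ∧
      ∀ i < n, hypConeRho D (c i, r) (c (i + 1), r) ≤ ε := by
  have hδ : 0 < (Real.exp (ε / 2) - 1) * (Real.exp (-r) * D) := by
    have := Real.add_one_lt_exp (half_pos hε).ne'
    exact mul_pos (by linarith) (by positivity)
  obtain ⟨n, c, hc0, hcn, hc⟩ := hucc _ hδ x y
  exact ⟨n, c, hc0, hcn, fun i hi => hypConeRho_slice_le hD r (hc i hi)⟩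

theorem reflTransGen_adj_slice {D ε : ℝ} (hD : 0 < D) (hε : 0 < ε)
    (hucc : ∀ δ > (0:ℝ), ∀ x y : Z, ∃ (n : ℕ) (c : ℕ → Z),
      c 0 = x ∧ c n = y ∧ ∀ i < n, dist (c i) (c (i + 1)) ≤ δ) (r : ℝ) (x y : Z) :
    ReflTransGen (Adj D r ε) (x, r) (y, r) := by
  obtain ⟨n, c, hc0, hcn, hc⟩ := exists_slice_chain hD hε hucc r x y
  exact reflTransGen_iff_exists_nat_chain.2
    ⟨n, fun i => (c i, r), by simp [hc0], by simp [hcn], fun i hi => ⟨le_rfl, le_rfl, hc i hi⟩⟩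

theorem exists_chain_of_reflTransGen_adj {D r ε : ℝ} {p q : Z × ℝ} (hp : r ≤ p.2)
    (h : ReflTransGen (Adj D r ε) p q) :
    ∃ (n : ℕ) (c : ℕ → Z × ℝ), c 0 = p ∧ c n = q ∧ (∀ i ≤ n, r ≤ (c i).2) ∧
      ∀ i < n, hypConeRho D (c i) (c (i + 1)) ≤ ε := by
  obtain ⟨n, c, hc0, hcn, hc⟩ := reflTransGen_iff_exists_nat_chain.1 h
  refine ⟨n, c, hc0, hcn, ?_, fun i hi => (hc i hi).2.2⟩
  rintro (_ | i) hi
  · exact hc0 ▸ hp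
  · exact (hc i hi).2.1

end HypCone

/-- If `(Z,d)` is bounded, uniformly coarsely connected and has at
least two points, then every slice `S_r = Z × {r}` with the restricted cone metric is
`ε`-coarsely connected for every `ε > 0`; hence `H(Z) \ B_r = Z × [r,∞)` is uniformly
coarsely connected. -/
theorem hypCone_complement_coarselyConnected {Z : Type*} [MetricSpace Z]
    (hbdd : Bornology.IsBounded (Set.univ : Set Z)) (a b : Z) (hab : a ≠ b)
    (D : ℝ) (hD : D = Metric.diam (Set.univ : Set Z))
    (hucc : ∀ ε > (0:ℝ), ∀ x y : Z, ∃ (n : ℕ) (c : ℕ → Z),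
      c 0 = x ∧ c n = y ∧ ∀ i < n, dist (c i) (c (i + 1)) ≤ ε) :
    ∀ r : ℝ, 0 ≤ r →
      ((∀ ε > (0:ℝ), ∀ x y : Z, ∃ (n : ℕ) (c : ℕ → Z), c 0 = x ∧ c n = y ∧
        ∀ i < n, hypConeRho D (c i, r) (c (i + 1), r) ≤ ε) ∧
      (∀ ε > (0:ℝ), ∀ p q : Z × ℝ, r ≤ p.2 → r ≤ q.2 →
        ∃ (n : ℕ) (c : ℕ → Z × ℝ), c 0 = p ∧ c n = q ∧ (∀ i ≤ n, r ≤ (c i).2) ∧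
          ∀ i < n, hypConeRho D (c i) (c (i + 1)) ≤ ε)) := by
  intro r _
  have hDpos : 0 < D := hD ▸ diam_pos ⟨a, trivial, b, trivial, hab⟩ hbdd
  refine ⟨fun ε hε => HypCone.exists_slice_chain hDpos hε hucc r, fun ε hε p q hp hq => ?_⟩
  have down := HypCone.reflTransGen_adj_vertical hDpos hε p.1 hp
  have across := HypCone.reflTransGen_adj_slice hDpos hε hucc r p.1 q.1
  have up := symm (HypCone.reflTransGen_adj_vertical hDpos hε q.1 hq)
  exact HypCone.exists_chain_of_reflTransGen_adj hp ((down.trans across).trans up)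
end

section
/- With notation as below, for all x,y ∈ Z, r ≥ 0, and t ≥ 0: ρ_{r+t}((x,r+t),(y,r+t)) ≥ κ(L)^t · ρ_r((x,r),(y,r)), where κ(L) > 1 is a constant such that 1 + e^{−s}u ≤ (1+u)^{κ(L)^{−s}} for all s ≥ 0, u ∈ [0,e^L]. -/
open Metric

/-- The set of lengths of admissible `L`-chains from `x` to `y` staying in
`H(Z) \ B_r = Z × [r,∞)`. -/
noncomputable def chainSums {Z : Type*} [MetricSpace Z] (D L r : ℝ) (x y : Z × ℝ) :
    Set ℝ :=
  {S | ∃ (n : ℕ) (c : ℕ → Z × ℝ), c 0 = x ∧ c n = y ∧ (∀ i ≤ n, r ≤ (c i).2) ∧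
    (∀ i < n, hypConeRho D (c i) (c (i + 1)) ≤ L) ∧
    S = ∑ i ∈ Finset.range n, hypConeRho D (c i) (c (i + 1))}

/-- The chain metric `ρ_r` on `H(Z) \ B_r`. -/
noncomputable def chainDist {Z : Type*} [MetricSpace Z] (D L r : ℝ) (x y : Z × ℝ) : ℝ :=
  sInf (chainSums D L r x y)

/-!
In closed form `ρ(p, q) = |Δheight| + 2 log (1 + e^{min height} d(p, q) / D)`. The map
`(z, h) ↦ (z, r + κ^{-t} (h - (r + t)))` sends `H(Z) \ B_{r+t}` into `H(Z) \ B_r` and scales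
the height term by `κ^{-t}`; it lowers the minimal height by at least `t`, so the logarithmic
term of an `L`-link drops from `log (1 + u)` to at most `log (1 + e^{-t} u) ≤ κ^{-t} log (1 + u)`.
Thus every admissible chain at level `r + t` yields one at level `r` that is `κ^t` times shorter.
Uniform coarse connectedness of `Z` makes the set of chains at level `r + t` nonempty, which is
what turns the bound on chains into a bound on their infimum.
-/

open Real Finset

section HyperbolicCone

variable {Z : Type*} [MetricSpace Z] {D : ℝ}

theorem hypConeRho_eq (hD : 0 < D) (p q : Z × ℝ) :
    hypConeRho D p q =
      |p.2 - q.2| + 2 * log (1 + exp (min p.2 q.2) * dist p.1 q.1 / D) := by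
  have hmax : max (exp (-p.2)) (exp (-q.2)) = exp (-min p.2 q.2) :=
    (Antitone.map_min (f := fun s => exp (-s)) fun _ _ h => exp_le_exp.2 (neg_le_neg h)).symm
  have hm : (p.2 + q.2) / 2 - min p.2 q.2 = |p.2 - q.2| / 2 := by
    linarith [min_add_max p.2 q.2, max_sub_min_eq_abs' p.2 q.2]
  have harg : (dist p.1 q.1 + exp (-min p.2 q.2) * D) / (exp (-(p.2 + q.2) / 2) * D) =
      exp (|p.2 - q.2| / 2) * (1 + exp (min p.2 q.2) * dist p.1 q.1 / D) := by
    rw [← hm, exp_sub, exp_neg, neg_div, exp_neg]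
    field_simp
    ring
  rw [hypConeRho, hmax, harg, log_mul (exp_ne_zero _) (by positivity), log_exp]
  ring

theorem hypConeRho_nonneg (hD : 0 < D) (p q : Z × ℝ) : 0 ≤ hypConeRho D p q := by
  rw [hypConeRho_eq hD]
  have : 0 ≤ log (1 + exp (min p.2 q.2) * dist p.1 q.1 / D) :=
    log_nonneg (le_add_of_nonneg_right (by positivity))
  positivity

theorem hypConeRho_same_height (hD : 0 < D) (x y : Z) (s : ℝ) :
    hypConeRho D (x, s) (y, s) = 2 * log (1 + exp s * dist x y / D) := by
  simp [hypConeRho_eq hD]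

theorem hypConeRho_same_height_le (hD : 0 < D) {L s : ℝ} {x y : Z}
    (h : dist x y ≤ D * (exp (L / 2) - 1) * exp (-s)) : hypConeRho D (x, s) (y, s) ≤ L := by
  have hu : exp s * dist x y / D ≤ exp (L / 2) - 1 := by
    rw [div_le_iff₀ hD]
    calc exp s * dist x y ≤ exp s * (D * (exp (L / 2) - 1) * exp (-s)) := by gcongr
      _ = (exp (L / 2) - 1) * D := by rw [exp_neg]; field_simp
  rw [hypConeRho_same_height hD, ← le_div_iff₀' two_pos,
    log_le_iff_le_exp (by positivity)]
  linarith

theorem chainSums_bddBelow (hD : 0 < D) (L r : ℝ) (x y : Z × ℝ) :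
    BddBelow (chainSums D L r x y) := by
  refine ⟨0, ?_⟩
  rintro S ⟨n, c, -, -, -, -, rfl⟩
  exact sum_nonneg fun i _ => hypConeRho_nonneg hD _ _

theorem chainSums_nonempty (hD : 0 < D) {L : ℝ} (hL : 0 < L)
    (hucc : ∀ ε > (0:ℝ), ∀ x y : Z, ∃ (n : ℕ) (c : ℕ → Z),
      c 0 = x ∧ c n = y ∧ ∀ i < n, dist (c i) (c (i + 1)) ≤ ε)
    (s : ℝ) (x y : Z) : (chainSums D L s (x, s) (y, s)).Nonempty := by
  have hε : 0 < D * (exp (L / 2) - 1) * exp (-s) := by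
    have : 1 < exp (L / 2) := one_lt_exp_iff.2 (half_pos hL)
    have : 0 < exp (L / 2) - 1 := by linarith
    positivity
  obtain ⟨n, c, hc0, hcn, hstep⟩ := hucc _ hε x y
  exact ⟨_, n, fun i => (c i, s), by simp [hc0], by simp [hcn], fun _ _ => le_rfl,
    fun i hi => hypConeRho_same_height_le hD (hstep i hi), rfl⟩

theorem chainDist_le_mul_of_mem_chainSums (hD : 0 < D) {L r r' c : ℝ} (hc1 : c ≤ 1)
    (f : Z × ℝ → Z × ℝ) (hf_height : ∀ p, r' ≤ p.2 → r ≤ (f p).2)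
    (hf_link : ∀ p q, r' ≤ p.2 → r' ≤ q.2 → hypConeRho D p q ≤ L →
      hypConeRho D (f p) (f q) ≤ c * hypConeRho D p q)
    {x y : Z × ℝ} {S : ℝ} (hS : S ∈ chainSums D L r' x y) :
    chainDist D L r (f x) (f y) ≤ c * S := by
  obtain ⟨n, γ, rfl, rfl, hheight, hlink, rfl⟩ := hS
  have hflink : ∀ i < n, hypConeRho D (f (γ i)) (f (γ (i + 1))) ≤
      c * hypConeRho D (γ i) (γ (i + 1)) := fun i hi =>
    hf_link _ _ (hheight i hi.le) (hheight (i + 1) hi) (hlink i hi)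
  have hmem : ∑ i ∈ range n, hypConeRho D (f (γ i)) (f (γ (i + 1))) ∈
      chainSums D L r (f (γ 0)) (f (γ n)) :=
    ⟨n, f ∘ γ, rfl, rfl, fun i hi => hf_height _ (hheight i hi),
      fun i hi => ((hflink i hi).trans
        (mul_le_of_le_one_left (hypConeRho_nonneg hD _ _) hc1)).trans (hlink i hi), rfl⟩
  calc chainDist D L r (f (γ 0)) (f (γ n))
      ≤ ∑ i ∈ range n, hypConeRho D (f (γ i)) (f (γ (i + 1))) :=
        csInf_le (chainSums_bddBelow hD _ _ _ _) hmem
    _ ≤ ∑ i ∈ range n, c * hypConeRho D (γ i) (γ (i + 1)) :=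
        sum_le_sum fun i hi => hflink i (mem_range.1 hi)
    _ = c * ∑ i ∈ range n, hypConeRho D (γ i) (γ (i + 1)) := (mul_sum _ _ _).symm

theorem chainDist_le_mul_chainDist (hD : 0 < D) {L r r' c : ℝ} (hc0 : 0 ≤ c) (hc1 : c ≤ 1)
    (f : Z × ℝ → Z × ℝ) (hf_height : ∀ p, r' ≤ p.2 → r ≤ (f p).2)
    (hf_link : ∀ p q, r' ≤ p.2 → r' ≤ q.2 → hypConeRho D p q ≤ L →
      hypConeRho D (f p) (f q) ≤ c * hypConeRho D p q)
    {x y : Z × ℝ} (hne : (chainSums D L r' x y).Nonempty) :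
    chainDist D L r (f x) (f y) ≤ c * chainDist D L r' x y := by
  unfold chainDist
  rw [← smul_eq_mul, ← Real.sInf_smul_of_nonneg hc0]
  refine le_csInf (hne.smul_set) ?_
  rintro _ ⟨S, hS, rfl⟩
  exact chainDist_le_mul_of_mem_chainSums hD hc1 f hf_height hf_link hS

end HyperbolicCone

section HeightContraction

variable {Z : Type*}

def heightContract (r t c : ℝ) (p : Z × ℝ) : Z × ℝ :=
  (p.1, r + c * (p.2 - (r + t)))

@[simp]
theorem heightContract_base (r t c : ℝ) (x : Z) : heightContract r t c (x, r + t) = (x, r) := by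
  simp [heightContract]

theorem le_heightContract_snd {r t c : ℝ} (hc : 0 ≤ c) {p : Z × ℝ} (hp : r + t ≤ p.2) :
    r ≤ (heightContract r t c p).2 :=
  le_add_of_nonneg_right (mul_nonneg hc (sub_nonneg.2 hp))

theorem hypConeRho_heightContract_le [MetricSpace Z] {D L r t c : ℝ} (hD : 0 < D) (hc0 : 0 ≤ c) (hc1 : c ≤ 1)
    (hc : ∀ u ∈ Set.Icc (0:ℝ) (exp L), 1 + exp (-t) * u ≤ (1 + u) ^ c)
    {p q : Z × ℝ} (hp : r + t ≤ p.2) (hq : r + t ≤ q.2) (hpq : hypConeRho D p q ≤ L) :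
    hypConeRho D (heightContract r t c p) (heightContract r t c q) ≤
      c * hypConeRho D p q := by
  set u := exp (min p.2 q.2) * dist p.1 q.1 / D with hu
  have hu0 : 0 ≤ u := by positivity
  have hρ : hypConeRho D p q = |p.2 - q.2| + 2 * log (1 + u) := hypConeRho_eq hD p q
  have hmin : min (heightContract r t c p).2 (heightContract r t c q).2 =
      r + c * (min p.2 q.2 - (r + t)) :=
    (Monotone.map_min (f := fun h => r + c * (h - (r + t))) fun _ _ h => by dsimp only; gcongr).symm
  have habs : |(heightContract r t c p).2 - (heightContract r t c q).2| = c * |p.2 - q.2| := by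
    simp only [heightContract]
    rw [show r + c * (p.2 - (r + t)) - (r + c * (q.2 - (r + t))) = c * (p.2 - q.2) by ring,
      abs_mul, abs_of_nonneg hc0]
  have hlower : r + c * (min p.2 q.2 - (r + t)) ≤ min p.2 q.2 - t := by
    have : 0 ≤ (1 - c) * (min p.2 q.2 - (r + t)) :=
      mul_nonneg (sub_nonneg.2 hc1) (sub_nonneg.2 (le_min hp hq))
    linarith
  have huL : u ≤ exp L := by
    have hlog : log (1 + u) ≤ L := by
      have := log_nonneg (le_add_of_nonneg_right hu0)
      linarith [abs_nonneg (p.2 - q.2)]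
    linarith [(log_le_iff_le_exp (by positivity)).1 hlog]
  have hhoriz : 1 + exp (r + c * (min p.2 q.2 - (r + t))) * dist p.1 q.1 / D ≤
      1 + exp (-t) * u := by
    have : exp (r + c * (min p.2 q.2 - (r + t))) ≤ exp (-t) * exp (min p.2 q.2) := by
      rw [← exp_add, neg_add_eq_sub]
      exact exp_le_exp.2 hlower
    calc 1 + exp (r + c * (min p.2 q.2 - (r + t))) * dist p.1 q.1 / D
        ≤ 1 + exp (-t) * exp (min p.2 q.2) * dist p.1 q.1 / D := by gcongr
      _ = 1 + exp (-t) * u := by rw [hu]; ring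
  have hlog : log (1 + exp (r + c * (min p.2 q.2 - (r + t))) * dist p.1 q.1 / D) ≤
      c * log (1 + u) := by
    rw [← log_rpow (by positivity)]
    exact log_le_log (by positivity) (hhoriz.trans (hc u ⟨hu0, huL⟩))
  rw [hypConeRho_eq hD, hmin, habs, hρ]
  simp only [heightContract]
  linarith

end HeightContraction

theorem chainDist_expansion_general {Z : Type*} [MetricSpace Z]
    (hbdd : Bornology.IsBounded (Set.univ : Set Z)) (a b : Z) (hab : a ≠ b)
    (D : ℝ) (hD : D = Metric.diam (Set.univ : Set Z))
    (hucc : ∀ ε > (0:ℝ), ∀ x y : Z, ∃ (n : ℕ) (c : ℕ → Z),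
      c 0 = x ∧ c n = y ∧ ∀ i < n, dist (c i) (c (i + 1)) ≤ ε)
    (μ : ℝ) (hμ : 0 ≤ μ)
    (L : ℝ) (hL : L = 1 + 2 * μ)
    (κ : ℝ) (hκ1 : 1 < κ)
    (hκ : ∀ s : ℝ, 0 ≤ s → ∀ u ∈ Set.Icc (0:ℝ) (Real.exp L),
      1 + Real.exp (-s) * u ≤ (1 + u) ^ (κ ^ (-s))) :
    ∀ (x y : Z) (r t : ℝ), 0 ≤ r → 0 ≤ t →
      κ ^ t * chainDist D L r (x, r) (y, r) ≤
        chainDist D L (r + t) (x, r + t) (y, r + t) := by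
  intro x y r t _ ht
  have hD0 : 0 < D := hD ▸ (dist_pos.2 hab).trans_le (dist_le_diam_of_mem hbdd trivial trivial)
  have hL0 : 0 < L := by rw [hL]; linarith
  have hκ0 : 0 < κ := one_pos.trans hκ1
  have hcontract := chainDist_le_mul_chainDist hD0 (rpow_nonneg hκ0.le (-t))
    (rpow_le_one_of_one_le_of_nonpos hκ1.le (neg_nonpos.2 ht)) (heightContract r t (κ ^ (-t)))
    (fun _ => le_heightContract_snd (rpow_nonneg hκ0.le (-t)))
    (fun _ _ hp hq hpq => hypConeRho_heightContract_le hD0 (rpow_nonneg hκ0.le (-t))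
      (rpow_le_one_of_one_le_of_nonpos hκ1.le (neg_nonpos.2 ht)) (hκ t ht) hp hq hpq)
    (chainSums_nonempty hD0 hL0 hucc (r + t) x y)
  rw [heightContract_base, heightContract_base] at hcontract
  calc κ ^ t * chainDist D L r (x, r) (y, r)
      ≤ κ ^ t * (κ ^ (-t) * chainDist D L (r + t) (x, r + t) (y, r + t)) := by gcongr
    _ = chainDist D L (r + t) (x, r + t) (y, r + t) := by
      rw [← mul_assoc, ← rpow_add hκ0, add_neg_cancel, rpow_zero, one_mul]

/-- For all `x, y ∈ Z`, `r ≥ 0` and `t ≥ 0`: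
`ρ_{r+t}((x,r+t),(y,r+t)) ≥ κ(L)^t · ρ_r((x,r),(y,r))`, where `κ(L) > 1` satisfies
`1 + e^{−s}u ≤ (1+u)^{κ(L)^{−s}}` for all `s ≥ 0` and `u ∈ [0, e^L]`. -/
theorem chainDist_expansion {Z : Type*} [MetricSpace Z]
    (hbdd : Bornology.IsBounded (Set.univ : Set Z)) (a b : Z) (hab : a ≠ b)
    (D : ℝ) (hD : D = Metric.diam (Set.univ : Set Z))
    (hucc : ∀ ε > (0:ℝ), ∀ x y : Z, ∃ (n : ℕ) (c : ℕ → Z),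
      c 0 = x ∧ c n = y ∧ ∀ i < n, dist (c i) (c (i + 1)) ≤ ε)
    (μ : ℝ) (hμ : 0 ≤ μ)
    (hrough : ∀ p q : Z × ℝ, 0 ≤ p.2 → 0 ≤ q.2 →
      ∃ γ : ℝ → Z × ℝ, γ 0 = p ∧ γ (hypConeRho D p q) = q ∧
        (∀ u ∈ Set.Icc 0 (hypConeRho D p q), 0 ≤ (γ u).2) ∧
        ∀ s ∈ Set.Icc 0 (hypConeRho D p q), ∀ t ∈ Set.Icc 0 (hypConeRho D p q),
          abs (hypConeRho D (γ s) (γ t) - |s - t|) ≤ 2 * μ)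
    (L : ℝ) (hL : L = 1 + 2 * μ)
    (κ : ℝ) (hκ1 : 1 < κ)
    (hκ : ∀ s : ℝ, 0 ≤ s → ∀ u ∈ Set.Icc (0:ℝ) (Real.exp L),
      1 + Real.exp (-s) * u ≤ (1 + u) ^ (κ ^ (-s))) :
    ∀ (x y : Z) (r t : ℝ), 0 ≤ r → 0 ≤ t →
      κ ^ t * chainDist D L r (x, r) (y, r) ≤
        chainDist D L (r + t) (x, r + t) (y, r + t) :=
  chainDist_expansion_general hbdd a b hab D hD hucc μ hμ L hL κ hκ1 hκ
end
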